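/- arXiv:2205.08855 — 2 statements merged into one kernel-verified Lean document; each statement's English description precedes it below -/
import Mathlib

section
/- For every f ∈ Pol_n the polynomial s̃_k f − s_k f is divisible by y_k − y_{k+1}, so that ∂_k f := (s̃_k f − s_k f)/(y_k − y_{k+1}) defines a K-linear operator ∂_k on Pol_n; moreover the assignment x_k ↦ (multiplication by x_k) and τ_k ↦ ∂_k extends (uniquely) to a K-algebra homomorphism R_n → End_K(Pol_n), i.e. Pol_n is a left R_n-module with each x_k acting by multiplication and each τ_k acting by ∂_k. -/
/-!
Let `σ_k` exchange `y_k ↔ y_{k+1}`. Then `s_k = σ_k ∘ s̃_k`, so `∂_k = D_k ∘ s̃_k`, where `D_k` is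
the classical divided difference `g ↦ (g - σ_k g) / (y_k - y_{k+1})` in the `y`-variables, which
exists because `y_k = y_{k+1}` modulo `y_k - y_{k+1}`. Every `s̃_j` fixes the `y`'s and so commutes
with every `D_k`; a word in the `∂`'s is therefore the same word in the `D`'s followed by the same
word in the `s̃`'s, and the relations of `Rₙ` among the `τ`'s follow from the nil-Coxeter relations
of the `D`'s and the Coxeter relations of the `s̃`'s. The relations between dots and crossings hold
because `D_k` is linear over `σ_k`-invariant polynomials, in particular over the `x`'s.
Uniqueness holds since `Rₙ` is generated by the `x_k` and `τ_k`.
-/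

namespace QH1

/-- Generators of the algebra `Rₙ` attached to a single imaginary index:
dots `x k` and crossings `t k`. -/
inductive Gen (n : ℕ) : Type
  | x (k : Fin n)
  | t (k : Fin (n - 1))

/-- Position `k` viewed in `Fin n`. -/
def pc {n : ℕ} (k : Fin (n - 1)) : Fin n := ⟨k.1, by have := k.2; omega⟩

/-- Position `k+1` viewed in `Fin n`. -/
def ps {n : ℕ} (k : Fin (n - 1)) : Fin n := ⟨k.1 + 1, by have := k.2; omega⟩

variable (K : Type) [Field K]

/-- The free algebra on the generators. -/
abbrev F (n : ℕ) : Type := FreeAlgebra K (Gen n)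

def gx {n : ℕ} (k : Fin n) : F K n := FreeAlgebra.ι K (Gen.x k)
def gt {n : ℕ} (k : Fin (n - 1)) : F K n := FreeAlgebra.ι K (Gen.t k)

/-- The defining relations of `Rₙ` (single imaginary index in `I⁻`). -/
inductive Rel (n : ℕ) : F K n → F K n → Prop
  | xx (k t : Fin n) : Rel n (gx K k * gx K t) (gx K t * gx K k)
  | tsq (k : Fin (n - 1)) : Rel n (gt K k * gt K k) 0
  | braid (k k' : Fin (n - 1)) (h : k'.1 = k.1 + 1) :
      Rel n (gt K k * gt K k' * gt K k) (gt K k' * gt K k * gt K k')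
  | ttfar (k t : Fin (n - 1)) (h : k.1 + 1 < t.1 ∨ t.1 + 1 < k.1) :
      Rel n (gt K k * gt K t) (gt K t * gt K k)
  | xt (k : Fin (n - 1)) : Rel n (gx K (pc k) * gt K k) (gt K k * gx K (ps k))
  | tx (k : Fin (n - 1)) : Rel n (gt K k * gx K (pc k)) (gx K (ps k) * gt K k)
  | txfar (k : Fin (n - 1)) (t : Fin n) (h1 : t ≠ pc k) (h2 : t ≠ ps k) :
      Rel n (gt K k * gx K t) (gx K t * gt K k)

/-- The algebra `Rₙ = R(n·i)` for a single imaginary index `i ∈ I⁻`. -/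
abbrev Rn (n : ℕ) : Type := RingQuot (Rel K n)

/-- The dot generators of `Rₙ`. -/
def X {n : ℕ} (k : Fin n) : Rn K n := RingQuot.mkAlgHom K (Rel K n) (gx K k)

/-- The crossing generators of `Rₙ`. -/
def T {n : ℕ} (k : Fin (n - 1)) : Rn K n := RingQuot.mkAlgHom K (Rel K n) (gt K k)

/-- The simple transposition `s_k` of `{1, …, n}`. -/
def sPerm {n : ℕ} (k : Fin (n - 1)) : Equiv.Perm (Fin n) := Equiv.swap (pc k) (ps k)

/-- `l` is a reduced word for the permutation `ω`. -/
def IsRedWord {n : ℕ} (ω : Equiv.Perm (Fin n)) (l : List (Fin (n - 1))) : Prop :=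
  (l.map sPerm).prod = ω ∧ ∀ l' : List (Fin (n - 1)), (l'.map sPerm).prod = ω → l.length ≤ l'.length

/-- `τ_ω`: the product of crossings along a word. -/
def tprod {n : ℕ} (l : List (Fin (n - 1))) : Rn K n := (l.map (T K)).prod

end QH1

namespace QH1

/-- The polynomial ring `Pol_n = K[x₁,…,xₙ,y₁,…,yₙ]`; `Sum.inl` indexes the `x`'s
and `Sum.inr` indexes the `y`'s. -/
abbrev Pol (K : Type) [Field K] (n : ℕ) : Type := MvPolynomial (Fin n ⊕ Fin n) K

variable (K : Type) [Field K]

/-- The automorphism `s̃_k` of `Pol_n` exchanging `x_k ↔ x_{k+1}`. -/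
noncomputable def sTil {n : ℕ} (k : Fin (n - 1)) (f : Pol K n) : Pol K n :=
  MvPolynomial.rename (Equiv.sumCongr (Equiv.swap (pc k) (ps k)) (Equiv.refl (Fin n))) f

/-- The automorphism `s_k` of `Pol_n` exchanging `x_k ↔ x_{k+1}` and `y_k ↔ y_{k+1}`. -/
noncomputable def sAct {n : ℕ} (k : Fin (n - 1)) (f : Pol K n) : Pol K n :=
  MvPolynomial.rename (Equiv.sumCongr (Equiv.swap (pc k) (ps k)) (Equiv.swap (pc k) (ps k))) f

/-- The variable `y_t`. -/
noncomputable def Yv {n : ℕ} (t : Fin n) : Pol K n := MvPolynomial.X (Sum.inr t)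

/-- The variable `x_t`. -/
noncomputable def Xv {n : ℕ} (t : Fin n) : Pol K n := MvPolynomial.X (Sum.inl t)

end QH1

namespace MvPolynomial

open Equiv

variable {σ R : Type*} [CommRing R]

theorem X_sub_X_ne_zero [Nontrivial R] {i j : σ} (hij : i ≠ j) :
    (X i - X j : MvPolynomial σ R) ≠ 0 :=
  sub_ne_zero.2 fun h => hij (X_injective h)

variable [DecidableEq σ]

theorem X_sub_X_dvd_sub_rename_swap (i j : σ) (f : MvPolynomial σ R) :
    X i - X j ∣ f - rename (swap i j) f := by
  rw [← Ideal.mem_span_singleton, ← Ideal.Quotient.eq]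
  have hij : Ideal.Quotient.mk (Ideal.span {X i - X j}) (X i : MvPolynomial σ R) =
      Ideal.Quotient.mk _ (X j) :=
    Ideal.Quotient.eq.2 (Ideal.mem_span_singleton_self _)
  have h : (Ideal.Quotient.mkₐ R (Ideal.span {X i - X j})).comp (rename (swap i j)) =
      Ideal.Quotient.mkₐ R _ := by
    ext k
    simp only [AlgHom.comp_apply, rename_X, Ideal.Quotient.mkₐ_eq_mk, swap_apply_def]
    split_ifs with hi hj
    · rw [hi, hij]
    · rw [hj, hij]
    · rfl
  exact (DFunLike.congr_fun h f).symm

theorem rename_swap_braid {i j l : σ} (hij : i ≠ j) (hjl : j ≠ l) (hil : i ≠ l)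
    (f : MvPolynomial σ R) :
    rename (swap i j) (rename (swap j l) (rename (swap i j) f)) =
      rename (swap j l) (rename (swap i j) (rename (swap j l) f)) := by
  simp only [rename_rename]
  congr 2
  ext x
  simp only [Function.comp_apply, swap_apply_def]
  split_ifs <;> simp_all

theorem rename_swap_comm {i j k l : σ} (hik : i ≠ k) (hil : i ≠ l) (hjk : j ≠ k) (hjl : j ≠ l)
    (f : MvPolynomial σ R) :
    rename (swap i j) (rename (swap k l) f) = rename (swap k l) (rename (swap i j) f) := by
  simp only [rename_rename]
  congr 2
  ext x
  simp only [Function.comp_apply, swap_apply_def]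
  split_ifs <;> simp_all

-- For `i = j` this is an arbitrary polynomial.
noncomputable def divDiff (i j : σ) (f : MvPolynomial σ R) : MvPolynomial σ R :=
  (X_sub_X_dvd_sub_rename_swap i j f).choose

theorem X_sub_X_mul_divDiff (i j : σ) (f : MvPolynomial σ R) :
    (X i - X j) * divDiff i j f = f - rename (swap i j) f :=
  (X_sub_X_dvd_sub_rename_swap i j f).choose_spec.symm

variable [IsDomain R] {i j : σ}

theorem divDiff_eq_of_mul_eq (hij : i ≠ j) {f g : MvPolynomial σ R}
    (h : (X i - X j) * g = f - rename (swap i j) f) : divDiff i j f = g :=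
  mul_left_cancel₀ (X_sub_X_ne_zero hij) ((X_sub_X_mul_divDiff i j f).trans h.symm)

theorem divDiff_mul_of_rename_swap_eq (hij : i ≠ j) {p : MvPolynomial σ R}
    (hp : rename (swap i j) p = p) (f : MvPolynomial σ R) :
    divDiff i j (p * f) = p * divDiff i j f := by
  refine divDiff_eq_of_mul_eq hij ?_
  rw [map_mul, hp, mul_left_comm, X_sub_X_mul_divDiff, mul_sub]

theorem divDiff_add (hij : i ≠ j) (f g : MvPolynomial σ R) :
    divDiff i j (f + g) = divDiff i j f + divDiff i j g := by
  refine divDiff_eq_of_mul_eq hij ?_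
  rw [mul_add, X_sub_X_mul_divDiff, X_sub_X_mul_divDiff, map_add]
  ring

theorem divDiff_sub (hij : i ≠ j) (f g : MvPolynomial σ R) :
    divDiff i j (f - g) = divDiff i j f - divDiff i j g := by
  refine divDiff_eq_of_mul_eq hij ?_
  rw [mul_sub, X_sub_X_mul_divDiff, X_sub_X_mul_divDiff, map_sub]
  ring

theorem divDiff_antisymm (hij : i ≠ j) (f : MvPolynomial σ R) :
    divDiff j i f = -divDiff i j f := by
  refine divDiff_eq_of_mul_eq hij.symm ?_
  rw [swap_comm, ← X_sub_X_mul_divDiff]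
  ring

theorem divDiff_neg (hij : i ≠ j) (f : MvPolynomial σ R) :
    divDiff i j (-f) = -divDiff i j f := by
  refine divDiff_eq_of_mul_eq hij ?_
  rw [mul_neg, X_sub_X_mul_divDiff, map_neg]
  ring

theorem divDiff_smul (hij : i ≠ j) (c : R) (f : MvPolynomial σ R) :
    divDiff i j (c • f) = c • divDiff i j f := by
  simp only [smul_eq_C_mul]
  exact divDiff_mul_of_rename_swap_eq hij (rename_C _ _) f

theorem divDiff_eq_zero_of_rename_swap_eq (hij : i ≠ j) {f : MvPolynomial σ R}
    (hf : rename (swap i j) f = f) : divDiff i j f = 0 :=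
  divDiff_eq_of_mul_eq hij (by rw [hf, sub_self, mul_zero])

theorem rename_divDiff (hij : i ≠ j) (e : Perm σ) (f : MvPolynomial σ R) :
    rename e (divDiff i j f) = divDiff (e i) (e j) (rename e f) := by
  refine (divDiff_eq_of_mul_eq (e.injective.ne hij) ?_).symm
  have h := congrArg (rename e) (X_sub_X_mul_divDiff i j f)
  rw [map_mul, map_sub, rename_X, rename_X, map_sub, rename_rename] at h
  rw [h, rename_rename, swap_apply_apply]
  congr 2
  ext x; simp

theorem rename_swap_divDiff (hij : i ≠ j) (f : MvPolynomial σ R) :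
    rename (swap i j) (divDiff i j f) = divDiff i j f := by
  refine mul_left_cancel₀ (neg_ne_zero.2 (X_sub_X_ne_zero (R := R) hij)) ?_
  have h := congrArg (rename (swap i j)) (X_sub_X_mul_divDiff i j f)
  rw [map_mul, map_sub, rename_X, rename_X, swap_apply_left, swap_apply_right, map_sub,
    rename_rename, ← coe_trans, swap_swap, coe_refl, rename_id_apply] at h
  linear_combination h + X_sub_X_mul_divDiff i j f

theorem divDiff_divDiff (hij : i ≠ j) (f : MvPolynomial σ R) :
    divDiff i j (divDiff i j f) = 0 :=
  divDiff_eq_zero_of_rename_swap_eq hij (rename_swap_divDiff hij f)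

theorem divDiff_comm {k l : σ} (hij : i ≠ j) (hkl : k ≠ l) (hik : i ≠ k) (hil : i ≠ l)
    (hjk : j ≠ k) (hjl : j ≠ l) (f : MvPolynomial σ R) :
    divDiff i j (divDiff k l f) = divDiff k l (divDiff i j f) := by
  refine divDiff_eq_of_mul_eq hij ?_
  have hsym : rename (swap k l) (X i - X j : MvPolynomial σ R) = X i - X j := by
    simp [swap_apply_of_ne_of_ne, hik, hil, hjk, hjl]
  rw [← divDiff_mul_of_rename_swap_eq hkl hsym, X_sub_X_mul_divDiff, divDiff_sub hkl,
    rename_divDiff hkl, swap_apply_of_ne_of_ne hik.symm hjk.symm,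
    swap_apply_of_ne_of_ne hil.symm hjl.symm]

theorem mul_divDiff_divDiff_divDiff {l : σ} (hij : i ≠ j) (hjl : j ≠ l) (hil : i ≠ l)
    (f : MvPolynomial σ R) :
    (X i - X j) * (X j - X l) * (X i - X l) * divDiff i j (divDiff j l (divDiff i j f)) =
      f - rename (swap i j) f - rename (swap j l) f
        + rename (swap i j) (rename (swap j l) f) + rename (swap j l) (rename (swap i j) f)
        - rename (swap i j) (rename (swap j l) (rename (swap i j) f)) := by
  set u := divDiff i j f
  set v := divDiff j l u
  have hw := X_sub_X_mul_divDiff i j v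
  have hv := X_sub_X_mul_divDiff j l u
  have hu := X_sub_X_mul_divDiff i j f
  have hsu : rename (swap i j) u = u := rename_swap_divDiff hij f
  have hsv := congrArg (rename (swap i j)) hv
  have htu := congrArg (rename (swap j l)) hu
  have hstu := congrArg (rename (swap i j)) htu
  simp only [map_mul, map_sub, rename_X, swap_apply_left, swap_apply_right,
    swap_apply_of_ne_of_ne hij hil, swap_apply_of_ne_of_ne hil.symm hjl.symm] at hsv htu hstu
  linear_combination (X j - X l) * (X i - X l) * hw + (X i - X l) * hv - (X j - X l) * hsv
    - (X j - X l) * hsu + hu - htu + hstu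

/-- Applied to `(l, j, i)`, `mul_divDiff_divDiff_divDiff` computes the other side of the braid
relation: `divDiff` is antisymmetric in its indices, the product of linear forms changes sign, and
the alternating sum over the permutations of `{i, j, l}` does not change. -/
theorem divDiff_braid {l : σ} (hij : i ≠ j) (hjl : j ≠ l) (hil : i ≠ l)
    (f : MvPolynomial σ R) :
    divDiff i j (divDiff j l (divDiff i j f)) = divDiff j l (divDiff i j (divDiff j l f)) := by
  refine mul_left_cancel₀ (mul_ne_zero (mul_ne_zero (X_sub_X_ne_zero hij) (X_sub_X_ne_zero hjl))
    (X_sub_X_ne_zero hil)) ?_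
  have h := mul_divDiff_divDiff_divDiff hjl.symm hij.symm hil.symm f
  simp only [divDiff_antisymm hjl, divDiff_antisymm hij, divDiff_neg hij, divDiff_neg hjl,
    swap_comm l j, swap_comm j i] at h
  rw [mul_divDiff_divDiff_divDiff hij hjl hil, rename_swap_braid hij hjl hil]
  linear_combination -h

end MvPolynomial

namespace QH1

open MvPolynomial Equiv

variable {K : Type} [Field K] {n : ℕ}

theorem pc_ne_ps (k : Fin (n - 1)) : pc k ≠ ps k :=
  Fin.ne_of_val_ne (by simp [pc, ps])

theorem sTil_eq_rename (k : Fin (n - 1)) (f : Pol K n) :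
    sTil K k f = rename (swap (Sum.inl (pc k)) (Sum.inl (ps k))) f := by
  rw [sTil, ← Perm.sumCongr_swap_refl]

theorem sAct_eq_rename_sTil (k : Fin (n - 1)) (f : Pol K n) :
    sAct K k f = rename (swap (Sum.inr (pc k)) (Sum.inr (ps k))) (sTil K k f) := by
  rw [sAct, sTil, rename_rename]
  congr 2
  ext (x | x) <;> simp [swap_apply_def] <;> split_ifs <;> simp_all

theorem sTil_divDiff (k : Fin (n - 1)) (a b : Fin n) (hab : a ≠ b) (f : Pol K n) :
    sTil K k (divDiff (Sum.inr a) (Sum.inr b) f) =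
      divDiff (Sum.inr a) (Sum.inr b) (sTil K k f) := by
  rw [sTil_eq_rename, sTil_eq_rename, rename_divDiff (Sum.inr_injective.ne hab),
    swap_apply_of_ne_of_ne Sum.inr_ne_inl Sum.inr_ne_inl,
    swap_apply_of_ne_of_ne Sum.inr_ne_inl Sum.inr_ne_inl]

theorem inr_pc_ne_inr_ps (k : Fin (n - 1)) :
    (Sum.inr (pc k) : Fin n ⊕ Fin n) ≠ Sum.inr (ps k) :=
  Sum.inr_injective.ne (pc_ne_ps k)

variable (K) in
noncomputable def twistedDivDiff (k : Fin (n - 1)) : Module.End K (Pol K n) where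
  toFun f := divDiff (Sum.inr (pc k)) (Sum.inr (ps k)) (sTil K k f)
  map_add' f g := by
    rw [← divDiff_add (inr_pc_ne_inr_ps k), sTil, sTil, sTil, map_add]
  map_smul' c f := by
    rw [RingHom.id_apply, ← divDiff_smul (inr_pc_ne_inr_ps k), sTil, sTil, map_smul]

theorem twistedDivDiff_apply (k : Fin (n - 1)) (f : Pol K n) :
    twistedDivDiff K k f = divDiff (Sum.inr (pc k)) (Sum.inr (ps k)) (sTil K k f) := rfl

theorem mul_twistedDivDiff (k : Fin (n - 1)) (f : Pol K n) :
    (Yv K (pc k) - Yv K (ps k)) * twistedDivDiff K k f = sTil K k f - sAct K k f := by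
  rw [twistedDivDiff_apply, Yv, Yv, X_sub_X_mul_divDiff, sAct_eq_rename_sTil]

theorem twistedDivDiff_eq_of_mul_eq {k : Fin (n - 1)} {f g : Pol K n}
    (h : (Yv K (pc k) - Yv K (ps k)) * g = sTil K k f - sAct K k f) :
    twistedDivDiff K k f = g :=
  divDiff_eq_of_mul_eq (inr_pc_ne_inr_ps k) (by rw [← sAct_eq_rename_sTil]; exact h)

theorem twistedDivDiff_Xv_mul (k : Fin (n - 1)) (t : Fin n) (f : Pol K n) :
    twistedDivDiff K k (Xv K t * f) = Xv K (swap (pc k) (ps k) t) * twistedDivDiff K k f := by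
  have hsym : rename (swap (Sum.inr (pc k)) (Sum.inr (ps k))) (Xv K (swap (pc k) (ps k) t)) =
      Xv K (swap (pc k) (ps k) t) := by
    rw [Xv, rename_X, swap_apply_of_ne_of_ne Sum.inl_ne_inr Sum.inl_ne_inr]
  rw [twistedDivDiff_apply, twistedDivDiff_apply, ← divDiff_mul_of_rename_swap_eq
    (inr_pc_ne_inr_ps k) hsym, sTil, sTil, map_mul, Xv, rename_X]
  rfl

theorem twistedDivDiff_twistedDivDiff (k : Fin (n - 1)) (f : Pol K n) :
    twistedDivDiff K k (twistedDivDiff K k f) = 0 := by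
  rw [twistedDivDiff_apply, twistedDivDiff_apply, sTil_divDiff _ _ _ (pc_ne_ps k),
    divDiff_divDiff (inr_pc_ne_inr_ps k)]

theorem twistedDivDiff_comm {k t : Fin (n - 1)} (h : k.1 + 1 < t.1 ∨ t.1 + 1 < k.1)
    (f : Pol K n) :
    twistedDivDiff K k (twistedDivDiff K t f) = twistedDivDiff K t (twistedDivDiff K k f) := by
  have h1 : pc k ≠ pc t := Fin.ne_of_val_ne (by simp only [pc]; omega)
  have h2 : pc k ≠ ps t := Fin.ne_of_val_ne (by simp only [pc, ps]; omega)
  have h3 : ps k ≠ pc t := Fin.ne_of_val_ne (by simp only [pc, ps]; omega)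
  have h4 : ps k ≠ ps t := Fin.ne_of_val_ne (by simp only [ps]; omega)
  simp only [twistedDivDiff_apply, sTil_divDiff _ _ _ (pc_ne_ps _)]
  rw [divDiff_comm (inr_pc_ne_inr_ps k) (inr_pc_ne_inr_ps t), sTil_eq_rename, sTil_eq_rename,
    sTil_eq_rename, sTil_eq_rename, rename_swap_comm] <;> simp [h1, h2, h3, h4]

theorem twistedDivDiff_braid {k k' : Fin (n - 1)} (h : k'.1 = k.1 + 1) (f : Pol K n) :
    twistedDivDiff K k (twistedDivDiff K k' (twistedDivDiff K k f)) =
      twistedDivDiff K k' (twistedDivDiff K k (twistedDivDiff K k' f)) := by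
  have hj : pc k' = ps k := Fin.ext (by simp only [pc, ps, h])
  have hij := pc_ne_ps k
  have hjl : ps k ≠ ps k' := Fin.ne_of_val_ne (by simp only [ps]; omega)
  have hil : pc k ≠ ps k' := Fin.ne_of_val_ne (by simp only [pc, ps]; omega)
  simp only [twistedDivDiff_apply, hj, sTil_divDiff _ _ _ hij, sTil_divDiff _ _ _ hjl,
    sTil_eq_rename]
  rw [divDiff_braid, rename_swap_braid] <;> simp [hij, hjl, hil]

variable (K n) in
noncomputable def freeRep : F K n →ₐ[K] Module.End K (Pol K n) :=
  FreeAlgebra.lift K fun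
    | .x t => LinearMap.mulLeft K (Xv K t)
    | .t k => twistedDivDiff K k

@[simp]
theorem freeRep_gx (t : Fin n) : freeRep K n (gx K t) = LinearMap.mulLeft K (Xv K t) :=
  FreeAlgebra.lift_ι_apply _ _

@[simp]
theorem freeRep_gt (k : Fin (n - 1)) : freeRep K n (gt K k) = twistedDivDiff K k :=
  FreeAlgebra.lift_ι_apply _ _

theorem freeRep_rel {a b : F K n} (h : Rel K n a b) : freeRep K n a = freeRep K n b := by
  cases h with
  | xx k t => exact LinearMap.ext fun f => by simp [mul_left_comm]
  | tsq k => exact LinearMap.ext fun f => by simp [twistedDivDiff_twistedDivDiff]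
  | braid k k' h => exact LinearMap.ext fun f => by simp [twistedDivDiff_braid h]
  | ttfar k t h => exact LinearMap.ext fun f => by simp [twistedDivDiff_comm h]
  | xt k => exact LinearMap.ext fun f => by simp [twistedDivDiff_Xv_mul]
  | tx k => exact LinearMap.ext fun f => by simp [twistedDivDiff_Xv_mul]
  | txfar k t h1 h2 =>
    exact LinearMap.ext fun f => by simp [twistedDivDiff_Xv_mul, swap_apply_of_ne_of_ne h1 h2]

variable (K n) in
noncomputable def polRep : Rn K n →ₐ[K] Module.End K (Pol K n) :=
  RingQuot.liftAlgHom K ⟨freeRep K n, fun _ _ => freeRep_rel⟩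

theorem polRep_X (k : Fin n) : polRep K n (X K k) = LinearMap.mulLeft K (Xv K k) := by
  rw [polRep, X, RingQuot.liftAlgHom_mkAlgHom_apply, freeRep_gx]

theorem polRep_T (k : Fin (n - 1)) : polRep K n (T K k) = twistedDivDiff K k := by
  rw [polRep, T, RingQuot.liftAlgHom_mkAlgHom_apply, freeRep_gt]

theorem Rn.algHom_ext {A : Type*} [Semiring A] [Algebra K A] {φ ψ : Rn K n →ₐ[K] A}
    (hX : ∀ k, φ (X K k) = ψ (X K k)) (hT : ∀ k, φ (T K k) = ψ (T K k)) : φ = ψ :=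
  RingQuot.ringQuot_ext' K φ ψ <| FreeAlgebra.hom_ext <| funext fun
    | .x k => hX k
    | .t k => hT k

end QH1

open QH1 in
theorem statement1_general (K : Type) [Field K] (n : ℕ) :
    (∀ (k : Fin (n - 1)) (f : Pol K n),
      (Yv K (pc k) - Yv K (ps k)) ∣ (sTil K k f - sAct K k f)) ∧
    ∃! ρ : Rn K n →ₐ[K] Module.End K (Pol K n),
      (∀ (k : Fin n) (f : Pol K n), ρ (X K k) f = Xv K k * f) ∧
      (∀ (k : Fin (n - 1)) (f : Pol K n),
        (Yv K (pc k) - Yv K (ps k)) * (ρ (T K k) f) = sTil K k f - sAct K k f) := by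
  refine ⟨fun k f => Dvd.intro _ (mul_twistedDivDiff k f), polRep K n,
    ⟨fun k f => ?_, fun k f => ?_⟩, ?_⟩
  · rw [polRep_X, LinearMap.mulLeft_apply]
  · rw [polRep_T]
    exact mul_twistedDivDiff k f
  rintro ρ ⟨hX, hT⟩
  refine Rn.algHom_ext (fun k => LinearMap.ext fun f => ?_) (fun k => LinearMap.ext fun f => ?_)
  · rw [hX, polRep_X, LinearMap.mulLeft_apply]
  · rw [polRep_T]
    exact (twistedDivDiff_eq_of_mul_eq (hT k f)).symm

open QH1 in
/-- for every `f ∈ Pol_n` the polynomial `s̃_k f − s_k f` is divisible by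
`y_k − y_{k+1}`, so the divided difference `∂_k` is a well-defined `K`-linear operator;
moreover `x_k ↦ (mult. by x_k)`, `τ_k ↦ ∂_k` extends uniquely to an algebra homomorphism
`R_n → End_K(Pol_n)`, making `Pol_n` a left `R_n`-module. -/
theorem statement1 (K : Type) [Field K] [IsAlgClosed K] (n : ℕ) (hn : 1 ≤ n)
    (r : ℕ) (hr : 0 < r) (a : ℤ) (ha : a ≤ 0) (ha2 : Even a) :
    (∀ (k : Fin (n - 1)) (f : Pol K n),
      (Yv K (pc k) - Yv K (ps k)) ∣ (sTil K k f - sAct K k f)) ∧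
    ∃! ρ : Rn K n →ₐ[K] Module.End K (Pol K n),
      (∀ (k : Fin n) (f : Pol K n), ρ (X K k) f = Xv K k * f) ∧
      (∀ (k : Fin (n - 1)) (f : Pol K n),
        (Yv K (pc k) - Yv K (ps k)) * (ρ (T K k) f) = sTil K k f - sAct K k f) :=
  statement1_general K n
end

section
/- The center of R_n is exactly P_n^{S_n}, the algebra of symmetric polynomials in x_1,…,x_n. -/
namespace QH2
open QH1 Equiv MvPolynomial

variable {n : ℕ}

lemma pc_ne_ps (k : Fin (n-1)) : pc k ≠ ps k := by
  simp [pc, ps, Fin.ext_iff]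

lemma sPerm_pc (k : Fin (n-1)) : sPerm k (pc k) = ps k := Equiv.swap_apply_left _ _

lemma sPerm_ps (k : Fin (n-1)) : sPerm k (ps k) = pc k := Equiv.swap_apply_right _ _

lemma sPerm_ne (k : Fin (n-1)) {t : Fin n} (h1 : t ≠ pc k) (h2 : t ≠ ps k) :
    sPerm k t = t := Equiv.swap_apply_of_ne_of_ne h1 h2

lemma sPerm_inv (k : Fin (n-1)) : (sPerm k)⁻¹ = sPerm k := Equiv.swap_inv _ _

lemma sPerm_sq (k : Fin (n-1)) : sPerm k * sPerm k = 1 := Equiv.swap_mul_self _ _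

lemma sval (k : Fin (n-1)) (t : Fin n) :
    ((sPerm k t : Fin n) : ℕ) = if (t : ℕ) = (k : ℕ) then (k : ℕ) + 1
      else if (t : ℕ) = (k : ℕ) + 1 then (k : ℕ) else (t : ℕ) := by
  by_cases h1 : t = pc k
  · subst h1; rw [sPerm_pc]; simp [pc, ps]
  · by_cases h2 : t = ps k
    · subst h2; rw [sPerm_ps]; simp [pc, ps, Fin.ext_iff]
    · rw [sPerm_ne k h1 h2]
      have h1' : (t : ℕ) ≠ (k : ℕ) := fun h => h1 (by simp [pc, Fin.ext_iff, h])
      have h2' : (t : ℕ) ≠ (k : ℕ) + 1 := fun h => h2 (by simp [ps, Fin.ext_iff, h])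
      simp [h1', h2']

set_option maxHeartbeats 2000000 in
lemma sBraid {k k' : Fin (n-1)} (h : (k' : ℕ) = (k : ℕ) + 1) :
    sPerm k * sPerm k' * sPerm k = sPerm k' * sPerm k * sPerm k' := by
  ext t
  simp only [Equiv.Perm.mul_apply, sval, h]
  split_ifs <;> omega

set_option maxHeartbeats 2000000 in
lemma sComm {k t : Fin (n-1)} (h : (k : ℕ) + 1 < (t : ℕ) ∨ (t : ℕ) + 1 < (k : ℕ)) :
    sPerm k * sPerm t = sPerm t * sPerm k := by
  ext u
  simp only [Equiv.Perm.mul_apply, sval]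
  split_ifs <;> omega

/-- `k` is an "ascent" for left multiplication: `ℓ(s_k ω) = ℓ(ω) + 1`. -/
def Asc (ω : Equiv.Perm (Fin n)) (k : Fin (n-1)) : Prop :=
  ((ω⁻¹ (pc k) : Fin n) : ℕ) < ((ω⁻¹ (ps k) : Fin n) : ℕ)

instance (ω : Equiv.Perm (Fin n)) (k : Fin (n-1)) : Decidable (Asc ω k) :=
  inferInstanceAs (Decidable (_ < _))

lemma asc_one (k : Fin (n-1)) : Asc (1 : Equiv.Perm (Fin n)) k := by
  simp [Asc, pc, ps]

lemma asc_smul (j k : Fin (n-1)) (ω : Equiv.Perm (Fin n)) :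
    Asc (sPerm j * ω) k ↔
      ((ω⁻¹ (sPerm j (pc k)) : Fin n) : ℕ) < ((ω⁻¹ (sPerm j (ps k)) : Fin n) : ℕ) := by
  simp [Asc, mul_inv_rev, sPerm_inv, Equiv.Perm.mul_apply]

lemma asc_smul_self (k : Fin (n-1)) (ω : Equiv.Perm (Fin n)) :
    Asc (sPerm k * ω) k ↔ ¬ Asc ω k := by
  rw [asc_smul, sPerm_pc, sPerm_ps]
  have hne : ω⁻¹ (pc k) ≠ ω⁻¹ (ps k) := fun h => pc_ne_ps k (ω⁻¹.injective h)
  rw [Fin.ne_iff_vne] at hne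
  unfold Asc; omega

/-- Number of inversions of a permutation. -/
def nInv (ω : Equiv.Perm (Fin n)) : ℕ :=
  (Finset.univ.filter fun p : Fin n × Fin n =>
    (p.1 : ℕ) < (p.2 : ℕ) ∧ ((ω p.2 : Fin n) : ℕ) < ((ω p.1 : Fin n) : ℕ)).card

lemma inv_step {ω : Equiv.Perm (Fin n)} {k : Fin (n-1)} (h : Asc ω k) :
    nInv (sPerm k * ω) = nInv ω + 1 := by
  classical
  set i0 := ω⁻¹ (pc k) with hi0
  set j0 := ω⁻¹ (ps k) with hj0
  have hwi0 : ω i0 = pc k := Equiv.apply_symm_apply ω _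
  have hwj0 : ω j0 = ps k := Equiv.apply_symm_apply ω _
  have hij : (i0 : ℕ) < (j0 : ℕ) := h
  have hset : (Finset.univ.filter fun p : Fin n × Fin n =>
      (p.1 : ℕ) < (p.2 : ℕ) ∧ (((sPerm k * ω) p.2 : Fin n) : ℕ) < (((sPerm k * ω) p.1 : Fin n) : ℕ))
      = insert (i0, j0) (Finset.univ.filter fun p : Fin n × Fin n =>
      (p.1 : ℕ) < (p.2 : ℕ) ∧ ((ω p.2 : Fin n) : ℕ) < ((ω p.1 : Fin n) : ℕ)) := by
    ext p
    simp only [Finset.mem_insert, Finset.mem_filter, Finset.mem_univ, true_and]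
    simp only [Equiv.Perm.mul_apply]
    have e1 : ((ω p.1 : Fin n) : ℕ) = (pc k : ℕ) ↔ (p.1 : ℕ) = (i0 : ℕ) := by
      rw [← Fin.ext_iff, ← Fin.ext_iff, ← hwi0, ω.apply_eq_iff_eq]
    have e2 : ((ω p.2 : Fin n) : ℕ) = (ps k : ℕ) ↔ (p.2 : ℕ) = (j0 : ℕ) := by
      rw [← Fin.ext_iff, ← Fin.ext_iff, ← hwj0, ω.apply_eq_iff_eq]
    have e3 : ((ω p.1 : Fin n) : ℕ) = (ps k : ℕ) ↔ (p.1 : ℕ) = (j0 : ℕ) := by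
      rw [← Fin.ext_iff, ← Fin.ext_iff, ← hwj0, ω.apply_eq_iff_eq]
    have e4 : ((ω p.2 : Fin n) : ℕ) = (pc k : ℕ) ↔ (p.2 : ℕ) = (i0 : ℕ) := by
      rw [← Fin.ext_iff, ← Fin.ext_iff, ← hwi0, ω.apply_eq_iff_eq]
    have ep : p = (i0, j0) ↔ (p.1 : ℕ) = (i0 : ℕ) ∧ (p.2 : ℕ) = (j0 : ℕ) := by
      rw [Prod.ext_iff, Fin.ext_iff, Fin.ext_iff]
    have s1 := sval k (ω p.1)
    have s2 := sval k (ω p.2)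
    have hpc : ((pc k : Fin n) : ℕ) = (k : ℕ) := rfl
    have hps : ((ps k : Fin n) : ℕ) = (k : ℕ) + 1 := rfl
    rw [ep]
    rw [hpc] at e1 e4; rw [hps] at e2 e3
    split_ifs at s1 s2 <;> omega
  have hnotmem : (i0, j0) ∉ (Finset.univ.filter fun p : Fin n × Fin n =>
      (p.1 : ℕ) < (p.2 : ℕ) ∧ ((ω p.2 : Fin n) : ℕ) < ((ω p.1 : Fin n) : ℕ)) := by
    simp only [Finset.mem_filter, Finset.mem_univ, true_and, hwi0, hwj0, not_and]
    intro _
    simp [pc, ps]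
  rw [nInv, hset, Finset.card_insert_of_notMem hnotmem]
  rfl

lemma inv_step' {ω : Equiv.Perm (Fin n)} {k : Fin (n-1)} (h : ¬ Asc ω k) :
    nInv ω = nInv (sPerm k * ω) + 1 := by
  have h2 : Asc (sPerm k * ω) k := (asc_smul_self k ω).2 h
  have := inv_step h2
  rwa [← mul_assoc, sPerm_sq, one_mul] at this

end QH2
namespace QH2
open QH1 Equiv MvPolynomial

variable {n : ℕ}

lemma strictMono_le {m : ℕ} {f : Fin m → Fin m} (hf : StrictMono f) (i : Fin m) :
    (i : ℕ) ≤ ((f i : Fin m) : ℕ) := by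
  have key : ∀ N : ℕ, ∀ i : Fin m, (i : ℕ) ≤ N → (i : ℕ) ≤ ((f i : Fin m) : ℕ) := by
    intro N
    induction N with
    | zero => intro i hi; omega
    | succ N IH =>
      intro i hi
      rcases Nat.lt_or_ge (i : ℕ) (N+1) with h | h
      · exact IH i (by omega)
      · have hiN : (i : ℕ) = N + 1 := by omega
        have hNm : N < m := by have := i.2; omega
        have hj : ((⟨N, hNm⟩ : Fin m) : ℕ) ≤ (f ⟨N, hNm⟩ : ℕ) := IH _ (le_refl _)
        have hlt : f ⟨N, hNm⟩ < f i := hf (by rw [Fin.lt_def]; simp; omega)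
        rw [Fin.lt_def] at hlt
        simp at hj
        omega
  exact key (i : ℕ) i (le_refl _)

lemma exists_descent {ω : Equiv.Perm (Fin n)} (hω : ω ≠ 1) : ∃ k, ¬ Asc ω k := by
  by_contra hc
  push_neg at hc
  apply hω
  rcases n with _ | m
  · exact Subsingleton.elim _ _
  have hsm : StrictMono (⇑(ω⁻¹ : Equiv.Perm (Fin (m+1)))) := by
    rw [Fin.strictMono_iff_lt_succ]
    intro i
    have := hc i
    rw [Asc] at this
    have hpc : pc (n := m+1) i = Fin.castSucc i := rfl
    have hps : ps (n := m+1) i = Fin.succ i := rfl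
    rw [hpc, hps] at this
    exact this
  have hsm2 : StrictMono (⇑ω) := by
    intro a b hab
    rcases lt_trichotomy (ω a) (ω b) with h | h | h
    · exact h
    · exact absurd (ω.injective h) (ne_of_lt hab)
    · exact absurd (hsm h) (by simp; exact le_of_lt hab)
  ext i
  have h1 : (i : ℕ) ≤ (ω i : ℕ) := strictMono_le hsm2 i
  have h2 : (i : ℕ) ≤ (ω⁻¹ i : ℕ) := strictMono_le hsm i
  have h3 : (ω (ω⁻¹ i) : ℕ) = (i : ℕ) := by simp
  have h4 : ((ω⁻¹ i : Fin (m+1)) : ℕ) ≤ ((ω i : Fin (m+1)) : ℕ) →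
      (ω (ω⁻¹ i) : ℕ) ≤ (ω (ω i) : ℕ) := fun h => hsm2.monotone (by rwa [Fin.le_def])
  -- from h2 : i ≤ ω⁻¹ i, apply monotone ω : ω i ≤ ω (ω⁻¹ i) = i
  have h6 : (ω i : ℕ) ≤ (ω (ω⁻¹ i) : ℕ) := by
    have := hsm2.monotone (a := i) (b := ω⁻¹ i) (by rwa [Fin.le_def])
    rwa [Fin.le_def] at this
  simp only [Equiv.Perm.coe_one, id_eq]
  omega

/-- A chosen descent. -/
noncomputable def dsc (ω : Equiv.Perm (Fin n)) (hω : ω ≠ 1) : Fin (n-1) :=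
  (exists_descent hω).choose

lemma dsc_spec (ω : Equiv.Perm (Fin n)) (hω : ω ≠ 1) : ¬ Asc ω (dsc ω hω) :=
  (exists_descent hω).choose_spec

variable (K : Type) [Field K]

/-- canonical crossing element attached to a permutation. -/
noncomputable def That (ω : Equiv.Perm (Fin n)) : Rn K n :=
  if hω : ω = 1 then 1 else T K (dsc ω hω) * That (sPerm (dsc ω hω) * ω)
termination_by nInv ω
decreasing_by
  have := inv_step' (dsc_spec ω hω)
  omega

lemma That_one : That (n := n) K 1 = 1 := by rw [That]; simp

lemma That_ne (ω : Equiv.Perm (Fin n)) (hω : ω ≠ 1) :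
    That K ω = T K (dsc ω hω) * That K (sPerm (dsc ω hω) * ω) := by
  rw [That]; simp [hω]

end QH2
namespace QH2
open QH1 Equiv MvPolynomial

variable {n : ℕ} (K : Type) [Field K]

lemma Xc (k t : Fin n) : X K k * X K t = X K t * X K k := by
  have := RingQuot.mkAlgHom_rel K (Rel.xx (K := K) k t)
  simp only [map_mul] at this; exact this

lemma Tsq (k : Fin (n-1)) : T K k * T K k = 0 := by
  have := RingQuot.mkAlgHom_rel K (Rel.tsq (K := K) k)
  simp only [map_mul, map_zero] at this; exact this

lemma Tbraid {k k' : Fin (n-1)} (h : (k' : ℕ) = (k : ℕ) + 1) :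
    T K k * T K k' * T K k = T K k' * T K k * T K k' := by
  have := RingQuot.mkAlgHom_rel K (Rel.braid (K := K) k k' h)
  simp only [map_mul] at this; exact this

lemma Tfar {k t : Fin (n-1)} (h : (k : ℕ) + 1 < (t : ℕ) ∨ (t : ℕ) + 1 < (k : ℕ)) :
    T K k * T K t = T K t * T K k := by
  have := RingQuot.mkAlgHom_rel K (Rel.ttfar (K := K) k t h)
  simp only [map_mul] at this; exact this

lemma TX (k : Fin (n-1)) (t : Fin n) :
    T K k * X K t = X K (sPerm k t) * T K k := by
  by_cases h1 : t = pc k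
  · subst h1
    rw [sPerm_pc]
    have := RingQuot.mkAlgHom_rel K (Rel.tx (K := K) k)
    simp only [map_mul] at this; exact this
  · by_cases h2 : t = ps k
    · subst h2
      rw [sPerm_ps]
      have := RingQuot.mkAlgHom_rel K (Rel.xt (K := K) k)
      simp only [map_mul] at this; exact this.symm
    · rw [sPerm_ne k h1 h2]
      have := RingQuot.mkAlgHom_rel K (Rel.txfar (K := K) k t h1 h2)
      simp only [map_mul] at this; exact this

/-- The polynomial subalgebra map. -/
noncomputable def Phi : MvPolynomial (Fin n) K →ₐ[K] Rn K n :=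
  letI : CommSemiring (Algebra.adjoin K (Set.range (X K)) : Subalgebra K (Rn K n)) :=
    Algebra.adjoinCommSemiringOfComm K (by rintro a ⟨i, rfl⟩ b ⟨j, rfl⟩; exact Xc K i j)
  (Subalgebra.val _).comp (MvPolynomial.aeval fun i =>
    (⟨X K i, Algebra.subset_adjoin ⟨i, rfl⟩⟩ : Algebra.adjoin K (Set.range (X K))))

lemma Phi_X (i : Fin n) : Phi K (MvPolynomial.X i) = X K i := by
  rw [Phi]
  simp only [AlgHom.coe_comp, Function.comp_apply, MvPolynomial.aeval_X, Subalgebra.coe_val]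

lemma TPhi (k : Fin (n-1)) (p : MvPolynomial (Fin n) K) :
    T K k * Phi K p = Phi K (rename (⇑(sPerm k)) p) * T K k := by
  induction p using MvPolynomial.induction_on with
  | C c =>
    rw [rename_C, ← MvPolynomial.algebraMap_eq, AlgHom.commutes]
    exact (Algebra.commutes c (T K k)).symm
  | add p q hp hq => rw [map_add, mul_add, hp, hq, map_add, map_add, add_mul]
  | mul_X p i hp =>
    rw [map_mul, Phi_X, map_mul, rename_X, map_mul, Phi_X, ← mul_assoc, hp, mul_assoc, TX, ← mul_assoc]

/-- The algebra map killing the crossings. -/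
noncomputable def pHom : Rn K n →ₐ[K] MvPolynomial (Fin n) K :=
  RingQuot.liftAlgHom K ⟨FreeAlgebra.lift K
    (fun g => match g with
      | Gen.x t => MvPolynomial.X t
      | Gen.t _ => 0),
    by
      intro a b hab
      induction hab with
      | xx k t => simp [gx, mul_comm]
      | tsq k => simp [gt]
      | braid k k' h => simp [gt]
      | ttfar k t h => simp [gt]
      | xt k => simp [gx, gt]
      | tx k => simp [gx, gt]
      | txfar k t h1 h2 => simp [gx, gt]⟩

lemma pHom_X (t : Fin n) : pHom K (X K t) = MvPolynomial.X t := by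
  unfold pHom QH1.X
  rw [RingQuot.liftAlgHom_mkAlgHom_apply]
  unfold gx
  rw [FreeAlgebra.lift_ι_apply]

lemma pHom_T (k : Fin (n-1)) : pHom K (T K k) = 0 := by
  unfold pHom T
  rw [RingQuot.liftAlgHom_mkAlgHom_apply]
  unfold gt
  rw [FreeAlgebra.lift_ι_apply]

lemma pHom_Phi (p : MvPolynomial (Fin n) K) : pHom K (Phi K p) = p := by
  have : (pHom K).comp (Phi K) = AlgHom.id K (MvPolynomial (Fin n) K) := by
    apply MvPolynomial.algHom_ext
    intro i
    simp [Phi_X, pHom_X]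
  calc pHom K (Phi K p) = ((pHom K).comp (Phi K)) p := rfl
  _ = p := by rw [this]; rfl

lemma pHom_That {ω : Equiv.Perm (Fin n)} (hω : ω ≠ 1) : pHom K (That K ω) = 0 := by
  rw [That_ne K ω hω, map_mul, pHom_T, zero_mul]

end QH2
namespace QH2
open QH1 Equiv MvPolynomial

variable {n : ℕ} (K : Type) [Field K]

lemma inv_smul_apply (j : Fin (n-1)) (ω : Equiv.Perm (Fin n)) (x : Fin n) :
    (sPerm j * ω)⁻¹ x = ω⁻¹ (sPerm j x) := by
  simp [mul_inv_rev, sPerm_inv]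

lemma asc_far {k t : Fin (n-1)} (h : (k : ℕ) + 1 < (t : ℕ) ∨ (t : ℕ) + 1 < (k : ℕ))
    (ω : Equiv.Perm (Fin n)) : Asc (sPerm t * ω) k ↔ Asc ω k := by
  have h1 : sPerm t (pc k) = pc k :=
    sPerm_ne t (Fin.ne_of_val_ne (by show (k : ℕ) ≠ (t : ℕ); omega))
      (Fin.ne_of_val_ne (by show (k : ℕ) ≠ (t : ℕ) + 1; omega))
  have h2 : sPerm t (ps k) = ps k :=
    sPerm_ne t (Fin.ne_of_val_ne (by show (k : ℕ) + 1 ≠ (t : ℕ); omega))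
      (Fin.ne_of_val_ne (by show (k : ℕ) + 1 ≠ (t : ℕ) + 1; omega))
  rw [asc_smul, h1, h2]
  exact Iff.rfl

/-- The module underlying the faithful representation. -/
abbrev Emod (n : ℕ) := Equiv.Perm (Fin n) →₀ MvPolynomial (Fin n) K

/-- Action of the dot generator. -/
noncomputable def xop (t : Fin n) : Emod K n →ₗ[K] Emod K n :=
  Finsupp.mapRange.linearMap (LinearMap.mulLeft K (MvPolynomial.X t))

lemma xop_single (t : Fin n) (ω : Equiv.Perm (Fin n)) (p : MvPolynomial (Fin n) K) :
    xop K t (Finsupp.single ω p) = Finsupp.single ω (MvPolynomial.X t * p) := by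
  simp [xop]

/-- Action of the crossing generator. -/
noncomputable def top (k : Fin (n-1)) : Emod K n →ₗ[K] Emod K n :=
  Finsupp.lsum K fun ω =>
    if Asc ω k then
      (Finsupp.lsingle (sPerm k * ω)).comp (rename (⇑(sPerm k))).toLinearMap
    else 0

lemma top_single (k : Fin (n-1)) (ω : Equiv.Perm (Fin n)) (p : MvPolynomial (Fin n) K) :
    top K k (Finsupp.single ω p) =
      if Asc ω k then Finsupp.single (sPerm k * ω) (rename (⇑(sPerm k)) p) else 0 := by
  rw [top, Finsupp.lsum_single]
  split_ifs with h <;> simp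

/-- The representation on the free algebra. -/
noncomputable def rho0 : F K n →ₐ[K] Module.End K (Emod K n) :=
  FreeAlgebra.lift K fun g => match g with
    | Gen.x t => xop K t
    | Gen.t k => top K k

lemma rho0_rel : ∀ ⦃a b : F K n⦄, Rel K n a b → rho0 K a = rho0 K b := by
  intro a b hab
  induction hab with
  | xx k t =>
    simp only [gx, map_mul, rho0, FreeAlgebra.lift_ι_apply]
    apply Finsupp.lhom_ext
    intro ω p
    simp only [Module.End.mul_apply, xop_single, mul_left_comm]
  | tsq k =>
    simp only [gt, map_mul, map_zero, rho0, FreeAlgebra.lift_ι_apply]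
    apply Finsupp.lhom_ext
    intro ω p
    rw [Module.End.mul_apply, top_single, LinearMap.zero_apply]
    by_cases h : Asc ω k
    · have h2 : ¬ Asc (sPerm k * ω) k := not_not_intro h ∘ (asc_smul_self k ω).mp
      rw [if_pos h, top_single, if_neg h2]
    · rw [if_neg h, map_zero]
  | ttfar k t h =>
    simp only [gt, map_mul, rho0, FreeAlgebra.lift_ι_apply]
    apply Finsupp.lhom_ext
    intro ω p
    have h' : (t : ℕ) + 1 < (k : ℕ) ∨ (k : ℕ) + 1 < (t : ℕ) := h.symm
    have e1 : Asc (sPerm t * ω) k ↔ Asc ω k := asc_far h ω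
    have e2 : Asc (sPerm k * ω) t ↔ Asc ω t := asc_far h' ω
    have hperm : sPerm k * (sPerm t * ω) = sPerm t * (sPerm k * ω) := by
      rw [← mul_assoc, sComm h, mul_assoc]
    have hren : rename (⇑(sPerm k)) (rename (⇑(sPerm t))
        (p : MvPolynomial (Fin n) K)) = rename (⇑(sPerm t)) (rename (⇑(sPerm k)) p) := by
      simp only [rename_rename, ← Equiv.Perm.coe_mul, sComm h]
    rw [Module.End.mul_apply, Module.End.mul_apply, top_single, top_single]
    by_cases h1 : Asc ω k <;> by_cases h2 : Asc ω t
    · rw [if_pos h1, if_pos h2, top_single, top_single, if_pos (e1.mpr h1),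
        if_pos (e2.mpr h2), hperm, hren]
    · rw [if_neg h2, if_pos h1, map_zero, top_single, if_neg (fun hh => h2 (e2.mp hh))]
    · rw [if_pos h2, if_neg h1, map_zero, top_single, if_neg (fun hh => h1 (e1.mp hh))]
    · rw [if_neg h1, if_neg h2, map_zero, map_zero]
  | braid k k' h =>
    simp only [gt, map_mul, rho0, FreeAlgebra.lift_ι_apply]
    apply Finsupp.lhom_ext
    intro ω p
    have f1 : pc k' = ps k := Fin.ext (by show (k' : ℕ) = (k : ℕ) + 1; omega)
    have g1 : sPerm k (pc k') = pc k := by rw [f1, sPerm_ps]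
    have g2 : sPerm k (ps k') = ps k' :=
      sPerm_ne k (Fin.ne_of_val_ne (by show (k' : ℕ) + 1 ≠ (k : ℕ); omega))
        (Fin.ne_of_val_ne (by show (k' : ℕ) + 1 ≠ (k : ℕ) + 1; omega))
    have g3 : sPerm k' (pc k) = pc k :=
      sPerm_ne k' (Fin.ne_of_val_ne (by show (k : ℕ) ≠ (k' : ℕ); omega))
        (Fin.ne_of_val_ne (by show (k : ℕ) ≠ (k' : ℕ) + 1; omega))
    have g4 : sPerm k' (ps k) = ps k' := by rw [← f1, sPerm_pc]
    have c2 : Asc ω k' ↔ ((ω⁻¹ (ps k) : Fin n) : ℕ) < ((ω⁻¹ (ps k') : Fin n) : ℕ) := by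
      unfold Asc; rw [f1]
    have c3 : Asc (sPerm k * ω) k' ↔
        ((ω⁻¹ (pc k) : Fin n) : ℕ) < ((ω⁻¹ (ps k') : Fin n) : ℕ) := by
      rw [asc_smul, g1, g2]
    have c4 : Asc (sPerm k' * (sPerm k * ω)) k ↔
        ((ω⁻¹ (ps k) : Fin n) : ℕ) < ((ω⁻¹ (ps k') : Fin n) : ℕ) := by
      rw [asc_smul, g3, g4, inv_smul_apply, inv_smul_apply, sPerm_pc, g2]
    have c5 : Asc (sPerm k' * ω) k ↔
        ((ω⁻¹ (pc k) : Fin n) : ℕ) < ((ω⁻¹ (ps k') : Fin n) : ℕ) := by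
      rw [asc_smul, g3, g4]
    have c6 : Asc (sPerm k * (sPerm k' * ω)) k' ↔
        ((ω⁻¹ (pc k) : Fin n) : ℕ) < ((ω⁻¹ (ps k) : Fin n) : ℕ) := by
      rw [asc_smul, g1, g2, inv_smul_apply, inv_smul_apply, g3, sPerm_ps, f1]
    have hperm : sPerm k * (sPerm k' * (sPerm k * ω)) =
        sPerm k' * (sPerm k * (sPerm k' * ω)) := by
      simp only [← mul_assoc]; rw [sBraid h]
    have hren : rename (⇑(sPerm k)) (rename (⇑(sPerm k'))
          (rename (⇑(sPerm k)) (p : MvPolynomial (Fin n) K))) =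
        rename (⇑(sPerm k')) (rename (⇑(sPerm k)) (rename (⇑(sPerm k')) p)) := by
      simp only [rename_rename, ← Equiv.Perm.coe_mul, ← mul_assoc, sBraid h]
    simp only [Module.End.mul_apply, top_single, map_zero,
      apply_ite (⇑(top K k)), apply_ite (⇑(top K k')), c2, c3, c4, c5, c6]
    split_ifs <;> unfold Asc at * <;> first
      | rfl
      | (exfalso; omega)
      | (rw [hperm, hren])
  | xt k =>
    simp only [gx, gt, map_mul, rho0, FreeAlgebra.lift_ι_apply]
    apply Finsupp.lhom_ext
    intro ω p
    rw [Module.End.mul_apply, Module.End.mul_apply, top_single, xop_single, top_single]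
    by_cases h : Asc ω k
    · rw [if_pos h, if_pos h, xop_single, map_mul, rename_X, sPerm_ps]
    · rw [if_neg h, if_neg h, map_zero]
  | tx k =>
    simp only [gx, gt, map_mul, rho0, FreeAlgebra.lift_ι_apply]
    apply Finsupp.lhom_ext
    intro ω p
    rw [Module.End.mul_apply, Module.End.mul_apply, xop_single, top_single, top_single]
    by_cases h : Asc ω k
    · rw [if_pos h, if_pos h, xop_single, map_mul, rename_X, sPerm_pc]
    · rw [if_neg h, if_neg h, map_zero]
  | txfar k t h1 h2 =>
    simp only [gx, gt, map_mul, rho0, FreeAlgebra.lift_ι_apply]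
    apply Finsupp.lhom_ext
    intro ω p
    rw [Module.End.mul_apply, Module.End.mul_apply, xop_single, top_single, top_single]
    by_cases h : Asc ω k
    · rw [if_pos h, if_pos h, xop_single, map_mul, rename_X, sPerm_ne k h1 h2]
    · rw [if_neg h, if_neg h, map_zero]

/-- The representation of `Rₙ`. -/
noncomputable def rho : Rn K n →ₐ[K] Module.End K (Emod K n) :=
  RingQuot.liftAlgHom K ⟨rho0 K, rho0_rel K⟩

lemma rho_X (t : Fin n) : rho K (X K t) = xop K t := by
  unfold rho QH1.X
  rw [RingQuot.liftAlgHom_mkAlgHom_apply]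
  unfold gx rho0
  rw [FreeAlgebra.lift_ι_apply]

lemma rho_T (k : Fin (n-1)) : rho K (T K k) = top K k := by
  unfold rho T
  rw [RingQuot.liftAlgHom_mkAlgHom_apply]
  unfold gt rho0
  rw [FreeAlgebra.lift_ι_apply]

end QH2
namespace QH2
open QH1 Equiv MvPolynomial

variable {n : ℕ} (K : Type) [Field K]

section adj
variable {k k' : Fin (n-1)} {ω : Equiv.Perm (Fin n)}

lemma adj_f1 (h : (k' : ℕ) = (k : ℕ) + 1) : pc k' = ps k := Fin.ext h

lemma adj_g1 (h : (k' : ℕ) = (k : ℕ) + 1) : sPerm k (pc k') = pc k := by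
  rw [adj_f1 h, sPerm_ps]

lemma adj_g2 (h : (k' : ℕ) = (k : ℕ) + 1) : sPerm k (ps k') = ps k' :=
  sPerm_ne k (Fin.ne_of_val_ne (by have := h; show (k' : ℕ) + 1 ≠ (k : ℕ); omega))
    (Fin.ne_of_val_ne (by have := h; show (k' : ℕ) + 1 ≠ (k : ℕ) + 1; omega))

lemma adj_g3 (h : (k' : ℕ) = (k : ℕ) + 1) : sPerm k' (pc k) = pc k :=
  sPerm_ne k' (Fin.ne_of_val_ne (by have := h; show (k : ℕ) ≠ (k' : ℕ); omega))
    (Fin.ne_of_val_ne (by have := h; show (k : ℕ) ≠ (k' : ℕ) + 1; omega))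

lemma adj_g4 (h : (k' : ℕ) = (k : ℕ) + 1) : sPerm k' (ps k) = ps k' := by
  rw [← adj_f1 h, sPerm_pc]

lemma adj_c2 (h : (k' : ℕ) = (k : ℕ) + 1) (ω : Equiv.Perm (Fin n)) :
    Asc ω k' ↔ ((ω⁻¹ (ps k) : Fin n) : ℕ) < ((ω⁻¹ (ps k') : Fin n) : ℕ) := by
  unfold Asc; rw [adj_f1 h]

lemma adj_c3 (h : (k' : ℕ) = (k : ℕ) + 1) (ω : Equiv.Perm (Fin n)) :
    Asc (sPerm k * ω) k' ↔
    ((ω⁻¹ (pc k) : Fin n) : ℕ) < ((ω⁻¹ (ps k') : Fin n) : ℕ) := by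
  rw [asc_smul, adj_g1 h, adj_g2 h]

lemma adj_c4 (h : (k' : ℕ) = (k : ℕ) + 1) (ω : Equiv.Perm (Fin n)) :
    Asc (sPerm k' * (sPerm k * ω)) k ↔
    ((ω⁻¹ (ps k) : Fin n) : ℕ) < ((ω⁻¹ (ps k') : Fin n) : ℕ) := by
  rw [asc_smul, adj_g3 h, adj_g4 h, inv_smul_apply, inv_smul_apply, sPerm_pc, adj_g2 h]

lemma adj_c5 (h : (k' : ℕ) = (k : ℕ) + 1) (ω : Equiv.Perm (Fin n)) :
    Asc (sPerm k' * ω) k ↔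
    ((ω⁻¹ (pc k) : Fin n) : ℕ) < ((ω⁻¹ (ps k') : Fin n) : ℕ) := by
  rw [asc_smul, adj_g3 h, adj_g4 h]

lemma adj_c6 (h : (k' : ℕ) = (k : ℕ) + 1) (ω : Equiv.Perm (Fin n)) :
    Asc (sPerm k * (sPerm k' * ω)) k' ↔
    ((ω⁻¹ (pc k) : Fin n) : ℕ) < ((ω⁻¹ (ps k) : Fin n) : ℕ) := by
  rw [asc_smul, adj_g1 h, adj_g2 h, inv_smul_apply, inv_smul_apply, adj_g3 h, sPerm_ps,
    adj_f1 h]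

end adj

/-- Straightening: for any descent `j` of `ω`, `τ̂_ω = τ_j τ̂_{s_j ω}`. -/
lemma claimC : ∀ (m : ℕ) (ω : Equiv.Perm (Fin n)), nInv ω = m → ∀ j, ¬ Asc ω j →
    That K ω = T K j * That K (sPerm j * ω) := by
  intro m
  induction m using Nat.strong_induction_on with
  | _ m IH =>
  intro ω hm j hj
  have hω : ω ≠ 1 := by rintro rfl; exact hj (asc_one j)
  have hdd : ¬ Asc ω (dsc ω hω) := dsc_spec ω hω
  rw [That_ne K ω hω]
  set d := dsc ω hω with hd
  by_cases hjd : j = d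
  · rw [hjd]
  -- main adjacent helper
  have hmain : ∀ k k' : Fin (n-1), (k' : ℕ) = (k : ℕ) + 1 → ¬ Asc ω k → ¬ Asc ω k' →
      T K k * That K (sPerm k * ω) = T K k' * That K (sPerm k' * ω) := by
    intro k k' hkk h1 h2
    have hAB : ((ω⁻¹ (pc k) : Fin n) : ℕ) ≠ ((ω⁻¹ (ps k) : Fin n) : ℕ) :=
      fun hh => pc_ne_ps k (ω⁻¹.injective (Fin.ext hh))
    have hne : ps k ≠ ps k' :=
      Fin.ne_of_val_ne (by have := hkk; show (k : ℕ) + 1 ≠ (k' : ℕ) + 1; omega)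
    have hBC : ((ω⁻¹ (ps k) : Fin n) : ℕ) ≠ ((ω⁻¹ (ps k') : Fin n) : ℕ) :=
      fun hh => hne (ω⁻¹.injective (Fin.ext hh))
    have h1' : ¬ ((ω⁻¹ (pc k) : Fin n) : ℕ) < ((ω⁻¹ (ps k) : Fin n) : ℕ) := h1
    have h2' : ¬ ((ω⁻¹ (ps k) : Fin n) : ℕ) < ((ω⁻¹ (ps k') : Fin n) : ℕ) :=
      fun hh => h2 ((adj_c2 hkk ω).mpr hh)
    have h3 : ¬ Asc (sPerm k * ω) k' := by rw [adj_c3 hkk]; omega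
    have h4 : ¬ Asc (sPerm k' * (sPerm k * ω)) k := by rw [adj_c4 hkk]; omega
    have h5 : ¬ Asc (sPerm k' * ω) k := by rw [adj_c5 hkk]; omega
    have h6 : ¬ Asc (sPerm k * (sPerm k' * ω)) k' := by rw [adj_c6 hkk]; omega
    have i1 : nInv ω = nInv (sPerm k * ω) + 1 := inv_step' h1
    have i2 : nInv (sPerm k * ω) = nInv (sPerm k' * (sPerm k * ω)) + 1 := inv_step' h3
    have i3 : nInv ω = nInv (sPerm k' * ω) + 1 := inv_step' h2
    have i4 : nInv (sPerm k' * ω) = nInv (sPerm k * (sPerm k' * ω)) + 1 := inv_step' h5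
    have e1 : That K (sPerm k * ω) =
        T K k' * That K (sPerm k' * (sPerm k * ω)) :=
      IH _ (by omega) _ rfl k' h3
    have e2 : That K (sPerm k' * (sPerm k * ω)) =
        T K k * That K (sPerm k * (sPerm k' * (sPerm k * ω))) :=
      IH _ (by omega) _ rfl k h4
    have e3 : That K (sPerm k' * ω) =
        T K k * That K (sPerm k * (sPerm k' * ω)) :=
      IH _ (by omega) _ rfl k h5
    have e4 : That K (sPerm k * (sPerm k' * ω)) =
        T K k' * That K (sPerm k' * (sPerm k * (sPerm k' * ω))) :=
      IH _ (by omega) _ rfl k' h6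
    have hperm : sPerm k * (sPerm k' * (sPerm k * ω)) =
        sPerm k' * (sPerm k * (sPerm k' * ω)) := by
      simp only [← mul_assoc]; rw [sBraid hkk]
    rw [e1, e2, e3, e4, hperm]
    simp only [← mul_assoc]
    rw [Tbraid K hkk]
  have hjd' : (j : ℕ) ≠ (d : ℕ) := fun hh => hjd (Fin.ext hh)
  rcases Nat.lt_trichotomy ((j : ℕ) + 1) (d : ℕ) with hlt | heq | hgt
  · -- j + 1 < d : far
    have hfar : (j : ℕ) + 1 < (d : ℕ) ∨ (d : ℕ) + 1 < (j : ℕ) := Or.inl hlt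
    have hfar' : (d : ℕ) + 1 < (j : ℕ) ∨ (j : ℕ) + 1 < (d : ℕ) := Or.inr hlt
    have h1' : ¬ Asc (sPerm d * ω) j := fun hh => hj ((asc_far hfar ω).mp hh)
    have h2' : ¬ Asc (sPerm j * ω) d := fun hh => hdd ((asc_far hfar' ω).mp hh)
    have i1 : nInv ω = nInv (sPerm d * ω) + 1 := inv_step' hdd
    have i2 : nInv ω = nInv (sPerm j * ω) + 1 := inv_step' hj
    have e1 : That K (sPerm d * ω) = T K j * That K (sPerm j * (sPerm d * ω)) :=
      IH _ (by omega) _ rfl j h1'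
    have e2 : That K (sPerm j * ω) = T K d * That K (sPerm d * (sPerm j * ω)) :=
      IH _ (by omega) _ rfl d h2'
    have hperm : sPerm j * (sPerm d * ω) = sPerm d * (sPerm j * ω) := by
      rw [← mul_assoc, sComm hfar, mul_assoc]
    rw [e1, e2, hperm, ← mul_assoc, ← mul_assoc, Tfar K hfar', mul_assoc]
  · -- j + 1 = d : adjacent
    exact (hmain j d (by omega) hj hdd).symm
  · rcases Nat.lt_trichotomy ((d : ℕ) + 1) (j : ℕ) with hlt2 | heq2 | hgt2
    · -- d + 1 < j : far
      have hfar : (d : ℕ) + 1 < (j : ℕ) ∨ (j : ℕ) + 1 < (d : ℕ) := Or.inl hlt2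
      have hfar' : (j : ℕ) + 1 < (d : ℕ) ∨ (d : ℕ) + 1 < (j : ℕ) := Or.inr hlt2
      have h1' : ¬ Asc (sPerm d * ω) j := fun hh => hj ((asc_far hfar' ω).mp hh)
      have h2' : ¬ Asc (sPerm j * ω) d := fun hh => hdd ((asc_far hfar ω).mp hh)
      have i1 : nInv ω = nInv (sPerm d * ω) + 1 := inv_step' hdd
      have i2 : nInv ω = nInv (sPerm j * ω) + 1 := inv_step' hj
      have e1 : That K (sPerm d * ω) = T K j * That K (sPerm j * (sPerm d * ω)) :=
        IH _ (by omega) _ rfl j h1'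
      have e2 : That K (sPerm j * ω) = T K d * That K (sPerm d * (sPerm j * ω)) :=
        IH _ (by omega) _ rfl d h2'
      have hperm : sPerm j * (sPerm d * ω) = sPerm d * (sPerm j * ω) := by
        rw [← mul_assoc, sComm hfar', mul_assoc]
      rw [e1, e2, hperm, ← mul_assoc, ← mul_assoc, Tfar K hfar, mul_assoc]
    · -- d + 1 = j : adjacent
      exact hmain d j (by omega) hdd hj
    · omega

lemma TThat_asc {ω : Equiv.Perm (Fin n)} {k : Fin (n-1)} (h : Asc ω k) :
    T K k * That K ω = That K (sPerm k * ω) := by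
  have h2 : ¬ Asc (sPerm k * ω) k := not_not_intro h ∘ (asc_smul_self k ω).mp
  have e := claimC K (nInv (sPerm k * ω)) (sPerm k * ω) rfl k h2
  rw [← mul_assoc, sPerm_sq, one_mul] at e
  exact e.symm

lemma TThat (ω : Equiv.Perm (Fin n)) (k : Fin (n-1)) :
    T K k * That K ω = if Asc ω k then That K (sPerm k * ω) else 0 := by
  split_ifs with h
  · exact TThat_asc K h
  · have e := claimC K (nInv ω) ω rfl k h
    rw [e, ← mul_assoc, Tsq, zero_mul]

end QH2
namespace QH2
open QH1 Equiv MvPolynomial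

variable {n : ℕ} (K : Type) [Field K]

/-- Action of `τ̂_ω` on `single 1 q`. -/
lemma That_single_one : ∀ (m : ℕ) (ω : Equiv.Perm (Fin n)), nInv ω = m →
    ∀ q : MvPolynomial (Fin n) K,
    rho K (That K ω) (Finsupp.single 1 q) = Finsupp.single ω (rename (⇑ω) q) := by
  intro m
  induction m using Nat.strong_induction_on with
  | _ m IH =>
  intro ω hm q
  by_cases hω : ω = 1
  · subst hω
    rw [That_one, map_one]
    simp
  · have hdd : ¬ Asc ω (dsc ω hω) := dsc_spec ω hω
    have hin : nInv ω = nInv (sPerm (dsc ω hω) * ω) + 1 := inv_step' hdd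
    have hνasc : Asc (sPerm (dsc ω hω) * ω) (dsc ω hω) := (asc_smul_self _ ω).mpr hdd
    have hsq : sPerm (dsc ω hω) * (sPerm (dsc ω hω) * ω) = ω := by
      rw [← mul_assoc, sPerm_sq, one_mul]
    have e1 := IH (nInv (sPerm (dsc ω hω) * ω)) (by omega) (sPerm (dsc ω hω) * ω) rfl q
    rw [That_ne K ω hω, map_mul, Module.End.mul_apply, e1, rho_T, top_single,
      if_pos hνasc, rename_rename, ← Equiv.Perm.coe_mul, hsq]

/-- `τ̂_ω` maps the `ν`-component into the `ω * ν`-component. -/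
lemma That_single_any : ∀ (m : ℕ) (ω : Equiv.Perm (Fin n)), nInv ω = m →
    ∀ (ν : Equiv.Perm (Fin n)) (q : MvPolynomial (Fin n) K),
    ∃ g, rho K (That K ω) (Finsupp.single ν q) = Finsupp.single (ω * ν) g := by
  intro m
  induction m using Nat.strong_induction_on with
  | _ m IH =>
  intro ω hm ν q
  by_cases hω : ω = 1
  · subst hω
    rw [That_one, map_one]
    exact ⟨q, by simp⟩
  · have hdd : ¬ Asc ω (dsc ω hω) := dsc_spec ω hω
    have hin : nInv ω = nInv (sPerm (dsc ω hω) * ω) + 1 := inv_step' hdd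
    obtain ⟨g, hg⟩ := IH (nInv (sPerm (dsc ω hω) * ω)) (by omega) (sPerm (dsc ω hω) * ω)
      rfl ν q
    have hsq : sPerm (dsc ω hω) * (sPerm (dsc ω hω) * ω * ν) = ω * ν := by
      rw [← mul_assoc, ← mul_assoc, sPerm_sq, one_mul]
    rw [That_ne K ω hω, map_mul, Module.End.mul_apply, hg, rho_T, top_single]
    split_ifs with hc
    · exact ⟨rename (⇑(sPerm (dsc ω hω))) g, by rw [mul_assoc] at hsq ⊢; rw [hsq]⟩
    · exact ⟨0, by rw [Finsupp.single_zero]⟩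

lemma PhiAct (p : MvPolynomial (Fin n) K) (ω : Equiv.Perm (Fin n))
    (q : MvPolynomial (Fin n) K) :
    rho K (Phi K p) (Finsupp.single ω q) = Finsupp.single ω (p * q) := by
  induction p using MvPolynomial.induction_on generalizing q with
  | C c =>
    rw [← MvPolynomial.algebraMap_eq, AlgHom.commutes, AlgHom.commutes,
      Module.algebraMap_end_apply, Finsupp.smul_single, smul_eq_C_mul,
      MvPolynomial.algebraMap_eq]
  | add p q' hp hq =>
    rw [map_add, map_add, LinearMap.add_apply, hp, hq, add_mul, Finsupp.single_add]
  | mul_X p i hp =>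
    rw [map_mul, Phi_X, map_mul, rho_X, Module.End.mul_apply, xop_single, hp, ← mul_assoc]

/-- The evaluation map `z ↦ z • (e_1 ⊗ 1)`. -/
noncomputable def Lmap : Rn K n →ₗ[K] Emod K n where
  toFun := fun z => rho K z (Finsupp.single 1 1)
  map_add' := by intro a b; simp only [map_add, LinearMap.add_apply]
  map_smul' := by intro c a; simp only [map_smul, LinearMap.smul_apply, RingHom.id_apply]

lemma Lmap_apply (z : Rn K n) : Lmap K z = rho K z (Finsupp.single 1 1) := rfl

/-- The section `Perm →₀ P → Rₙ`. -/
noncomputable def Mmap : Emod K n →ₗ[K] Rn K n :=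
  Finsupp.lsum K fun ω => (LinearMap.mulRight K (That K ω)).comp (Phi K).toLinearMap

lemma Mmap_single (ω : Equiv.Perm (Fin n)) (p : MvPolynomial (Fin n) K) :
    Mmap K (Finsupp.single ω p) = Phi K p * That K ω := by
  rw [Mmap, Finsupp.lsum_single]; rfl

lemma KEY1 (p : MvPolynomial (Fin n) K) (ω : Equiv.Perm (Fin n)) :
    Lmap K (Phi K p * That K ω) = Finsupp.single ω p := by
  rw [Lmap_apply, map_mul, Module.End.mul_apply, That_single_one K (nInv ω) ω rfl 1,
    map_one, PhiAct, mul_one]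

lemma LM (F : Emod K n) : Lmap K (Mmap K F) = F := by
  have h : (Lmap (n := n) K).comp (Mmap K) = LinearMap.id := by
    apply Finsupp.lhom_ext
    intro ω p
    rw [LinearMap.comp_apply, Mmap_single, KEY1, LinearMap.id_apply]
  calc Lmap K (Mmap K F) = ((Lmap K).comp (Mmap K)) F := rfl
  _ = F := by rw [h]; rfl

lemma Mmap_sum (F : Emod K n) :
    Mmap K F = F.sum fun ω p => Phi K p * That K ω := by
  rw [Mmap, Finsupp.lsum_apply]; rfl

lemma mulgen : ∀ (f : F K n) (w : Rn K n), w ∈ LinearMap.range (Mmap K) →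
    RingQuot.mkAlgHom K (Rel K n) f * w ∈ LinearMap.range (Mmap K) := by
  intro f
  induction f using FreeAlgebra.induction with
  | grade0 r =>
    intro w hw
    rw [AlgHom.commutes, ← Algebra.smul_def]
    exact Submodule.smul_mem _ r hw
  | grade1 g =>
    intro w hw
    obtain ⟨F, rfl⟩ := hw
    rw [Mmap_sum, Finsupp.sum, Finset.mul_sum]
    apply Submodule.sum_mem
    intro ω _
    cases g with
    | x t =>
      show X K t * (Phi K (F ω) * That K ω) ∈ _
      have he : X K t * (Phi K (F ω) * That K ω) =
          Phi K (MvPolynomial.X t * F ω) * That K ω := by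
        rw [map_mul, Phi_X, mul_assoc]
      rw [he]
      exact ⟨Finsupp.single ω (MvPolynomial.X t * F ω), Mmap_single K _ _⟩
    | t k =>
      show T K k * (Phi K (F ω) * That K ω) ∈ _
      have he : T K k * (Phi K (F ω) * That K ω) =
          Phi K (rename (⇑(sPerm k)) (F ω)) *
            (if Asc ω k then That K (sPerm k * ω) else 0) := by
        rw [← mul_assoc, TPhi, mul_assoc, TThat]
      rw [he]
      split_ifs with hc
      · exact ⟨Finsupp.single (sPerm k * ω) (rename (⇑(sPerm k)) (F ω)), Mmap_single K _ _⟩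
      · rw [mul_zero]
        exact Submodule.zero_mem _
  | mul a b iha ihb =>
    intro w hw
    rw [map_mul, mul_assoc]
    exact iha _ (ihb _ hw)
  | add a b iha ihb =>
    intro w hw
    rw [map_add, add_mul]
    exact Submodule.add_mem _ (iha _ hw) (ihb _ hw)

lemma Msurj : Function.Surjective (Mmap K (n := n)) := by
  intro z
  have h1 : (1 : Rn K n) ∈ LinearMap.range (Mmap K) :=
    ⟨Finsupp.single 1 1, by rw [Mmap_single, map_one, That_one, one_mul]⟩
  obtain ⟨f, hf⟩ := RingQuot.mkAlgHom_surjective K (Rel K n) z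
  have h2 := mulgen K f 1 h1
  rw [mul_one, hf] at h2
  exact h2

lemma MLz (z : Rn K n) : Mmap K (Lmap K z) = z := by
  obtain ⟨F, hF⟩ := Msurj K z
  rw [← hF, LM]

end QH2
namespace QH2
open QH1 Equiv MvPolynomial

variable {n : ℕ} (K : Type) [Field K]

lemma term_eval (p : MvPolynomial (Fin n) K) (ω' : Equiv.Perm (Fin n))
    (q : MvPolynomial (Fin n) K) :
    rho K (Phi K p * That K ω') (Finsupp.single 1 q) =
      Finsupp.single ω' (p * rename (⇑ω') q) := by
  rw [map_mul, Module.End.mul_apply, That_single_one K (nInv ω') ω' rfl, PhiAct]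

lemma comp_x (z : Rn K n) (t : Fin n) (ω : Equiv.Perm (Fin n)) :
    (rho K z (Finsupp.single 1 (MvPolynomial.X t))) ω
      = MvPolynomial.X (ω t) * (Lmap K z) ω := by
  obtain ⟨F, rfl⟩ := Msurj K z
  rw [LM, Mmap_sum, map_finsuppSum, Finsupp.sum, LinearMap.sum_apply,
    Finsupp.finset_sum_apply]
  have hterm : ∀ ω' ∈ F.support,
      (rho K (Phi K (F ω') * That K ω') (Finsupp.single 1 (MvPolynomial.X t))) ω =
        if ω' = ω then F ω' * MvPolynomial.X (ω' t) else 0 := by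
    intro ω' _
    rw [term_eval, rename_X, Finsupp.single_apply]
  rw [Finset.sum_congr rfl hterm, Finset.sum_ite_eq']
  by_cases hmem : ω ∈ F.support
  · rw [if_pos hmem, mul_comm]
  · rw [if_neg hmem, Finsupp.notMem_support_iff.mp hmem, mul_zero]

lemma comp_nu (z : Rn K n) (ν : Equiv.Perm (Fin n)) :
    (rho K z (Finsupp.single ν 1)) ν = pHom K z := by
  obtain ⟨F, rfl⟩ := Msurj K z
  rw [Mmap_sum, map_finsuppSum, map_finsuppSum, Finsupp.sum, Finsupp.sum,
    LinearMap.sum_apply, Finsupp.finset_sum_apply]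
  apply Finset.sum_congr rfl
  intro ω' _
  by_cases h1 : ω' = 1
  · subst h1
    rw [That_one, mul_one, PhiAct, mul_one, Finsupp.single_eq_same, pHom_Phi]
  · obtain ⟨g, hg⟩ := That_single_any K (nInv ω') ω' rfl ν 1
    have hne : ω' * ν ≠ ν := fun hh => h1 (mul_eq_right.mp hh)
    rw [map_mul, map_mul, Module.End.mul_apply, hg, PhiAct, pHom_That K h1, mul_zero,
      Finsupp.single_eq_of_ne' hne]

lemma central_comp_zero (z : Rn K n) (hz : z ∈ Subalgebra.center K (Rn K n)) :
    ∀ ω : Equiv.Perm (Fin n), ω ≠ 1 → Lmap K z ω = 0 := by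
  intro ω hω
  have hex : ∃ t, ω t ≠ t := by
    by_contra hc; push_neg at hc; exact hω (Equiv.ext hc)
  obtain ⟨t, ht⟩ := hex
  have hc : z * X K t = X K t * z := (Subalgebra.mem_center_iff.mp hz (X K t)).symm
  have h1 : rho K (z * X K t) (Finsupp.single 1 1) =
      rho K (X K t * z) (Finsupp.single 1 1) := by rw [hc]
  rw [map_mul, map_mul, Module.End.mul_apply, Module.End.mul_apply, rho_X, xop_single,
    mul_one] at h1
  have h2 : (rho K z (Finsupp.single 1 (MvPolynomial.X t))) ω =
      (xop K t (rho K z (Finsupp.single 1 1))) ω := by rw [h1]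
  rw [comp_x] at h2
  have h3 : (xop K t (rho K z (Finsupp.single 1 1))) ω =
      MvPolynomial.X t * (Lmap K z) ω := by
    rw [xop]
    simp only [Finsupp.mapRange.linearMap_apply, Finsupp.mapRange_apply,
      LinearMap.mulLeft_apply, Lmap_apply]
  rw [h3] at h2
  have h4 : (MvPolynomial.X (ω t) - MvPolynomial.X t) * (Lmap K z) ω = 0 := by
    rw [sub_mul, h2, sub_self]
  have h5 : MvPolynomial.X (ω t) - MvPolynomial.X t ≠ (0 : MvPolynomial (Fin n) K) :=
    sub_ne_zero_of_ne (fun hh => ht (MvPolynomial.X_injective hh))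
  exact (mul_eq_zero.mp h4).resolve_left h5

lemma central_Lmap (z : Rn K n) (hz : z ∈ Subalgebra.center K (Rn K n)) :
    Lmap K z = Finsupp.single 1 (pHom K z) := by
  apply Finsupp.ext
  intro ω
  by_cases hω : ω = 1
  · subst hω
    rw [Finsupp.single_eq_same]
    exact comp_nu K z 1
  · rw [central_comp_zero K z hz ω hω, Finsupp.single_eq_of_ne' (fun hh => hω hh.symm)]

lemma central_renames (z : Rn K n) (hz : z ∈ Subalgebra.center K (Rn K n))
    (k : Fin (n-1)) : rename (⇑(sPerm k)) (pHom K z) = pHom K z := by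
  have hc : z * T K k = T K k * z := (Subalgebra.mem_center_iff.mp hz (T K k)).symm
  have h1 : rho K z (rho K (T K k) (Finsupp.single 1 1)) =
      rho K (T K k) (rho K z (Finsupp.single 1 1)) := by
    rw [← Module.End.mul_apply, ← map_mul, hc, map_mul, Module.End.mul_apply]
  rw [rho_T, top_single, if_pos (asc_one k), map_one, mul_one] at h1
  have h2 : (rho K z (Finsupp.single (sPerm k) 1)) (sPerm k) =
      (top K k (rho K z (Finsupp.single 1 1))) (sPerm k) := by rw [h1]
  rw [comp_nu, ← Lmap_apply, central_Lmap K z hz, top_single, if_pos (asc_one k),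
    mul_one, Finsupp.single_eq_same] at h2
  exact h2.symm

lemma central_sym (z : Rn K n) (hz : z ∈ Subalgebra.center K (Rn K n)) :
    (pHom K z).IsSymmetric := by
  have hs := central_renames K z hz
  have key : ∀ (m : ℕ) (σ : Equiv.Perm (Fin n)), nInv σ = m →
      rename (⇑σ) (pHom K z) = pHom K z := by
    intro m
    induction m using Nat.strong_induction_on with
    | _ m IH =>
    intro σ hm
    by_cases hσ : σ = 1
    · subst hσ
      rw [Equiv.Perm.coe_one, rename_id, AlgHom.id_apply]
    · have hdd : ¬ Asc σ (dsc σ hσ) := dsc_spec σ hσ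
      have hin : nInv σ = nInv (sPerm (dsc σ hσ) * σ) + 1 := inv_step' hdd
      have hcoe : (⇑σ : Fin n → Fin n) =
          ⇑(sPerm (dsc σ hσ)) ∘ ⇑(sPerm (dsc σ hσ) * σ) := by
        rw [← Equiv.Perm.coe_mul, ← mul_assoc, sPerm_sq, one_mul]
      rw [hcoe, ← rename_rename, IH (nInv (sPerm (dsc σ hσ) * σ)) (by omega) _ rfl,
        hs (dsc σ hσ)]
  intro σ
  exact key (nInv σ) σ rfl

lemma central_eq (z : Rn K n) (hz : z ∈ Subalgebra.center K (Rn K n)) :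
    z = Phi K (pHom K z) := by
  calc z = Mmap K (Lmap K z) := (MLz K z).symm
  _ = Mmap K (Finsupp.single 1 (pHom K z)) := by rw [central_Lmap K z hz]
  _ = Phi K (pHom K z) * That K 1 := Mmap_single K _ _
  _ = Phi K (pHom K z) := by rw [That_one, mul_one]

lemma Phi_central (p : MvPolynomial (Fin n) K) (hp : p.IsSymmetric) :
    Phi K p ∈ Subalgebra.center K (Rn K n) := by
  rw [Subalgebra.mem_center_iff]
  intro b
  obtain ⟨f, rfl⟩ := RingQuot.mkAlgHom_surjective K (Rel K n) b
  induction f using FreeAlgebra.induction with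
  | grade0 r =>
    rw [AlgHom.commutes]
    exact Algebra.commutes r _
  | grade1 g =>
    cases g with
    | x t =>
      show X K t * Phi K p = Phi K p * X K t
      rw [← Phi_X, ← map_mul, ← map_mul, mul_comm]
    | t k =>
      show T K k * Phi K p = Phi K p * T K k
      rw [TPhi, hp (sPerm k)]
  | mul a b iha ihb =>
    rw [map_mul, mul_assoc, ihb, ← mul_assoc, iha, mul_assoc]
  | add a b iha ihb =>
    rw [map_add, add_mul, iha, ihb, mul_add]

lemma expr_eq (p : MvPolynomial (Fin n) K) :
    (∑ m ∈ p.support, p.coeff m • (List.ofFn fun k : Fin n => X K k ^ m k).prod) = Phi K p := by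
  have hmono : ∀ m : Fin n →₀ ℕ, (List.ofFn fun k : Fin n => X K k ^ m k).prod
      = Phi K (∏ i : Fin n, MvPolynomial.X i ^ m i) := by
    intro m
    have h1 : (List.ofFn fun k : Fin n => X K k ^ m k) =
        List.map (Phi K) (List.ofFn fun k : Fin n => MvPolynomial.X k ^ m k) := by
      rw [List.map_ofFn]
      congr 1
      funext k
      rw [Function.comp_apply, map_pow, Phi_X]
    rw [h1, ← map_list_prod, List.prod_ofFn]
  have hm : ∀ (m : Fin n →₀ ℕ) (c : K),
      (monomial m c : MvPolynomial (Fin n) K) = c • ∏ i : Fin n, MvPolynomial.X i ^ m i := by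
    intro m c
    rw [monomial_eq, smul_eq_C_mul]
    congr 1
    rw [Finsupp.prod]
    apply Finset.prod_subset (Finset.subset_univ _)
    intro i _ hi
    rw [Finsupp.notMem_support_iff.mp hi, pow_zero]
  calc (∑ m ∈ p.support, p.coeff m • (List.ofFn fun k : Fin n => X K k ^ m k).prod)
      = ∑ m ∈ p.support, Phi K (monomial m (p.coeff m)) := by
        apply Finset.sum_congr rfl
        intro m _
        rw [hmono, hm, map_smul]
  _ = Phi K (∑ m ∈ p.support, monomial m (p.coeff m)) := (map_sum _ _ _).symm
  _ = Phi K p := by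
        rw [← MvPolynomial.as_sum p]

end QH2
open QH1 in
/-- the center of `Rₙ` is exactly `Pₙ^{Sₙ}`, the algebra of symmetric
polynomials in `x₁, …, xₙ`. -/
theorem statement3 (K : Type) [Field K] [IsAlgClosed K] (n : ℕ) (hn : 1 ≤ n)
    (r : ℕ) (hr : 0 < r) (a : ℤ) (ha : a ≤ 0) (ha2 : Even a) :
    ∀ z : Rn K n, z ∈ Subalgebra.center K (Rn K n) ↔
      ∃ p : MvPolynomial (Fin n) K, p.IsSymmetric ∧
        z = ∑ m ∈ p.support, p.coeff m • (List.ofFn fun k : Fin n => X K k ^ m k).prod := by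
  intro z
  constructor
  · intro hz
    refine ⟨QH2.pHom K z, QH2.central_sym K z hz, ?_⟩
    rw [QH2.expr_eq]
    exact QH2.central_eq K z hz
  · rintro ⟨p, hp, rfl⟩
    rw [QH2.expr_eq]
    exact QH2.Phi_central K p hp
end
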